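/- arXiv:2311.10519 — 3 statements merged into one kernel-verified Lean document; each statement's English description precedes it below -/
import Mathlib

section
/- Let n ∈ ℕ with n ≥ 1, let r = (r₁,…,rₙ) with rᵢ > 0 for all i, let d ∈ ℝ and p ≥ 1. Let μ : ℝⁿ → ℝ and η : ℝⁿ → ℝ be continuous functions with μ(x) ≥ 0 for all x, both r-homogeneous of degree d, i.e. for all κ > 0 and all x ∈ ℝⁿ: μ(Δ_κ^r(x)) = κ^d·μ(x) and η(Δ_κ^r(x)) = κ^d·η(x). Assume that every x ∈ ℝⁿ∖{0} with μ(x) = 0 satisfies η(x) < 0. Then there exist λ* ∈ ℝ and c > 0 such that for every λ ≥ λ* and every x ∈ ℝⁿ∖{0}: η(x) − λ·μ(x) < −c·(‖x‖_{r,p})^d. -/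
open scoped BigOperators

/-- Lemma 1 (dominating homogeneous function): if `μ ≥ 0` and `η` are continuous,
`r`-homogeneous of degree `d`, and `η < 0` on the nonzero zero-set of `μ`, then
there are `λ*` and `c > 0` with `η x - λ μ x < -c ‖x‖_{r,p}^d` for all `λ ≥ λ*`, `x ≠ 0`. -/
theorem stmt0 (n : ℕ) (hn : 1 ≤ n) (r : Fin n → ℝ) (hr : ∀ i, 0 < r i)
    (d p : ℝ) (hp : 1 ≤ p)
    (μ η : (Fin n → ℝ) → ℝ)
    (hμc : Continuous μ) (hηc : Continuous η)
    (hμnn : ∀ x, 0 ≤ μ x)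
    (hμhom : ∀ κ > (0:ℝ), ∀ x : Fin n → ℝ,
      μ (fun i => κ ^ (r i) * x i) = κ ^ d * μ x)
    (hηhom : ∀ κ > (0:ℝ), ∀ x : Fin n → ℝ,
      η (fun i => κ ^ (r i) * x i) = κ ^ d * η x)
    (hzero : ∀ x : Fin n → ℝ, x ≠ 0 → μ x = 0 → η x < 0) :
    ∃ (lamStar : ℝ) (c : ℝ), 0 < c ∧
      ∀ lam ≥ lamStar, ∀ x : Fin n → ℝ, x ≠ 0 →
        η x - lam * μ x < -c * ((∑ i, |x i| ^ (p / r i)) ^ (1 / p)) ^ d := by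
  have hp0 : (0:ℝ) < p := lt_of_lt_of_le one_pos hp
  have hq0 : ∀ i : Fin n, 0 < p / r i := fun i => div_pos hp0 (hr i)
  have hfc : Continuous (fun x : Fin n → ℝ => ∑ i, |x i| ^ (p / r i)) := by
    apply continuous_finset_sum
    intro i _
    have h1 : Continuous fun x : Fin n → ℝ => |x i| := (continuous_apply i).abs
    have h2 : Continuous fun t : ℝ => t ^ (p / r i) := by
      rw [continuous_iff_continuousAt]
      intro t
      exact Real.continuousAt_rpow_const t _ (Or.inr (hq0 i).le)
    exact h2.comp h1
  set S : Set (Fin n → ℝ) := {y | ∑ i, |y i| ^ (p / r i) = 1} with hSdef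
  have hS0 : (0 : Fin n → ℝ) ∉ S := by
    intro h
    have : (∑ i : Fin n, |(0:Fin n → ℝ) i| ^ (p / r i)) = 0 :=
      Finset.sum_eq_zero fun i _ => by
        rw [Pi.zero_apply, abs_zero]
        exact Real.zero_rpow (ne_of_gt (hq0 i))
    rw [hSdef] at h
    simp only [Set.mem_setOf_eq] at h
    rw [this] at h
    norm_num at h
  have hSsub : S ⊆ Metric.closedBall 0 1 := by
    intro y hy
    rw [Metric.mem_closedBall, dist_zero_right]
    rw [pi_norm_le_iff_of_nonneg zero_le_one]
    intro i
    rw [Real.norm_eq_abs]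
    by_contra h
    push_neg at h
    have h1 : (1:ℝ) < |y i| ^ (p / r i) := by
      have := Real.rpow_lt_rpow zero_le_one h (hq0 i)
      rwa [Real.one_rpow] at this
    have h2 : |y i| ^ (p / r i) ≤ ∑ j, |y j| ^ (p / r j) :=
      Finset.single_le_sum (f := fun j => |y j| ^ (p / r j))
        (fun j _ => Real.rpow_nonneg (abs_nonneg _) _) (Finset.mem_univ i)
    have hy1 : (∑ j, |y j| ^ (p / r j)) = 1 := hy
    linarith
  have hSclosed : IsClosed S := isClosed_eq hfc continuous_const
  have hScpt : IsCompact S :=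
    (isCompact_closedBall (0 : Fin n → ℝ) 1).of_isClosed_subset hSclosed hSsub
  have hSne : S.Nonempty := by
    refine ⟨fun j => if j = (⟨0, hn⟩ : Fin n) then (1:ℝ) else 0, ?_⟩
    show (∑ i, |if i = (⟨0, hn⟩ : Fin n) then (1:ℝ) else 0| ^ (p / r i)) = 1
    rw [Finset.sum_eq_single (⟨0, hn⟩ : Fin n)]
    · simp
    · intro i _ hi
      rw [if_neg hi, abs_zero]
      exact Real.zero_rpow (ne_of_gt (hq0 i))
    · simp
  -- existence of lamStar with pointwise negativity on S
  have key : ∃ lamStar : ℝ, ∀ y ∈ S, η y - lamStar * μ y < 0 := by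
    set A : Set (Fin n → ℝ) := S ∩ {y | 0 ≤ η y} with hAdef
    by_cases hAne : A.Nonempty
    · have hAcpt : IsCompact A := hScpt.inter_right (isClosed_le continuous_const hηc)
      obtain ⟨ym, hymA, hym⟩ := hAcpt.exists_isMinOn hAne hμc.continuousOn
      obtain ⟨yM, hyMS, hyM⟩ := hScpt.exists_isMaxOn hSne hηc.continuousOn
      have hymne : ym ≠ 0 := fun h => hS0 (h ▸ hymA.1)
      have hm : 0 < μ ym := by
        rcases lt_or_eq_of_le (hμnn ym) with h | h
        · exact h
        · exact absurd (hzero ym hymne h.symm) (not_lt.2 hymA.2)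
      obtain ⟨a, haA⟩ := hAne
      have hM1 : 0 < η yM + 1 := by
        have h1 : η a ≤ η yM := hyM haA.1
        have h2 : 0 ≤ η a := haA.2
        linarith
      have hls : 0 < (η yM + 1) / μ ym := div_pos hM1 hm
      refine ⟨(η yM + 1) / μ ym, ?_⟩
      intro y hy
      by_cases hη : 0 ≤ η y
      · have hyA : y ∈ A := ⟨hy, hη⟩
        have h1 : μ ym ≤ μ y := hym hyA
        have h2 : η y ≤ η yM := hyM hy
        have h3 : (η yM + 1) / μ ym * μ ym ≤ (η yM + 1) / μ ym * μ y :=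
          mul_le_mul_of_nonneg_left h1 hls.le
        rw [div_mul_cancel₀ _ (ne_of_gt hm)] at h3
        linarith
      · push_neg at hη
        have h4 : 0 ≤ (η yM + 1) / μ ym * μ y := mul_nonneg hls.le (hμnn y)
        linarith
    · refine ⟨0, ?_⟩
      intro y hy
      by_contra h
      push_neg at h
      exact hAne ⟨y, hy, by simp only [Set.mem_setOf_eq]; linarith⟩
  obtain ⟨lamStar, hlamStar⟩ := key
  obtain ⟨y0, hy0S, hy0⟩ := hScpt.exists_isMaxOn hSne
    ((hηc.sub (continuous_const.mul hμc)).continuousOn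
      (f := fun y => η y - lamStar * μ y))
  have hgy0 : η y0 - lamStar * μ y0 < 0 := hlamStar y0 hy0S
  refine ⟨lamStar, -(η y0 - lamStar * μ y0) / 2, by linarith, ?_⟩
  intro lam hlam x hx
  have hfx : 0 < ∑ i, |x i| ^ (p / r i) := by
    obtain ⟨i, hi⟩ := Function.ne_iff.1 hx
    have hi0 : x i ≠ 0 := by simpa using hi
    have hi' : 0 < |x i| ^ (p / r i) := Real.rpow_pos_of_pos (abs_pos.2 hi0) _
    exact Finset.sum_pos' (fun j _ => Real.rpow_nonneg (abs_nonneg _) _)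
      ⟨i, Finset.mem_univ i, hi'⟩
  set κ : ℝ := (∑ i, |x i| ^ (p / r i)) ^ (1 / p) with hκdef
  have hκ : 0 < κ := Real.rpow_pos_of_pos hfx _
  set y : Fin n → ℝ := fun i => κ ^ (-(r i)) * x i with hydef
  have hxy : x = fun i => κ ^ (r i) * y i := by
    funext i
    show x i = κ ^ (r i) * (κ ^ (-(r i)) * x i)
    rw [← mul_assoc, ← Real.rpow_add hκ]
    simp
  have hyS : y ∈ S := by
    show (∑ i, |y i| ^ (p / r i)) = 1
    have hterm : ∀ i, |y i| ^ (p / r i) = κ ^ (-p) * |x i| ^ (p / r i) := by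
      intro i
      show |κ ^ (-(r i)) * x i| ^ (p / r i) = κ ^ (-p) * |x i| ^ (p / r i)
      rw [abs_mul, abs_of_pos (Real.rpow_pos_of_pos hκ _),
        Real.mul_rpow (Real.rpow_pos_of_pos hκ _).le (abs_nonneg _),
        ← Real.rpow_mul hκ.le]
      congr 2
      rw [neg_mul, mul_comm (r i) (p / r i), div_mul_cancel₀ p (hr i).ne']
    rw [Finset.sum_congr rfl (fun i _ => hterm i), ← Finset.mul_sum]
    have hκp : κ ^ (-p) = (∑ i, |x i| ^ (p / r i))⁻¹ := by
      rw [hκdef, ← Real.rpow_mul hfx.le]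
      rw [show 1 / p * (-p) = -1 by field_simp]
      exact Real.rpow_neg_one _
    rw [hκp, inv_mul_cancel₀ (ne_of_gt hfx)]
  have hκd : 0 < κ ^ d := Real.rpow_pos_of_pos hκ d
  have hηx : η x = κ ^ d * η y := by rw [hxy]; exact hηhom κ hκ y
  have hμx : μ x = κ ^ d * μ y := by rw [hxy]; exact hμhom κ hκ y
  have h1 : η y - lam * μ y ≤ η y0 - lamStar * μ y0 := by
    have h2 : lamStar * μ y ≤ lam * μ y := mul_le_mul_of_nonneg_right hlam (hμnn y)
    have h3 : η y - lamStar * μ y ≤ η y0 - lamStar * μ y0 := hy0 hyS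
    linarith
  have h4 : η y - lam * μ y < -(-(η y0 - lamStar * μ y0) / 2) := by linarith
  calc η x - lam * μ x = κ ^ d * (η y - lam * μ y) := by rw [hηx, hμx]; ring
    _ < κ ^ d * (-(-(η y0 - lamStar * μ y0) / 2)) := mul_lt_mul_of_pos_left h4 hκd
    _ = -(-(η y0 - lamStar * μ y0) / 2) * κ ^ d := by ring
end

section
/- Fix d ∈ [−1,1) and β > 0. Then the Lyapunov function V_l is positive definite on ℝ²: V_l(0,0) = 0 and V_l(z₁,z₂) > 0 for every (z₁,z₂) ∈ ℝ²∖{(0,0)}. -/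
/-!
With `q = 2 - d` and `p = q / (q - 1) = (2 - d) / (1 - d)` the exponents are Hölder conjugate
(this needs only `d < 1`) and `V_l(z₁, z₂) = |z₁|^p/p - z₁ z₂ + ((1 + β)/q) |z₂|^q`. Young's
inequality `z₁ z₂ ≤ |z₁|^p/p + |z₂|^q/q` gives `V_l(z₁, z₂) ≥ (β/q) |z₂|^q`, which is positive
unless `z₂ = 0`; for `z₂ = 0` what is left is `|z₁|^p/p`.
-/

/-- The Lyapunov function `V_l` of the second-order homogeneous differentiator. -/
noncomputable def Vl (d β z1 z2 : ℝ) : ℝ :=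
  ((1 - d) / (2 - d)) * |z1| ^ ((2 - d) / (1 - d)) - z1 * z2
    + ((1 + β) / (2 - d)) * |z2| ^ (2 - d)

namespace Real.HolderConjugate

variable {p q : ℝ}

theorem mul_rpow_le_rpow_div_sub_mul_add_mul_rpow (hpq : p.HolderConjugate q) (a b c : ℝ) :
    (c - 1 / q) * |b| ^ q ≤ |a| ^ p / p - a * b + c * |b| ^ q := by
  have := Real.young_inequality a b hpq
  linarith [show |b| ^ q / q = 1 / q * |b| ^ q by ring]

theorem rpow_div_sub_mul_add_mul_rpow_pos (hpq : p.HolderConjugate q) {c : ℝ} (hc : 1 / q < c)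
    {a b : ℝ} (hab : (a, b) ≠ (0, 0)) : 0 < |a| ^ p / p - a * b + c * |b| ^ q := by
  rcases eq_or_ne b 0 with rfl | hb
  · have ha : a ≠ 0 := fun ha => hab (by rw [ha])
    have := rpow_pos_of_pos (abs_pos.mpr ha) p
    simp only [mul_zero, sub_zero, abs_zero, zero_rpow hpq.symm.pos.ne', add_zero]
    exact div_pos this hpq.pos
  · have := rpow_pos_of_pos (abs_pos.mpr hb) q
    exact (mul_pos (sub_pos.mpr hc) this).trans_le
      (mul_rpow_le_rpow_div_sub_mul_add_mul_rpow hpq a b c)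

end Real.HolderConjugate

theorem holderConjugate_two_sub_div_one_sub {d : ℝ} (hd : d < 1) :
    ((2 - d) / (1 - d)).HolderConjugate (2 - d) := by
  have h := (Real.HolderConjugate.conjExponent (p := 2 - d) (by linarith)).symm
  rwa [Real.conjExponent, show 2 - d - 1 = 1 - d by ring] at h

theorem Vl_eq (d β z1 z2 : ℝ) :
    Vl d β z1 z2 = |z1| ^ ((2 - d) / (1 - d)) / ((2 - d) / (1 - d)) - z1 * z2
      + ((1 + β) / (2 - d)) * |z2| ^ (2 - d) := by
  rw [Vl, div_div_eq_mul_div, mul_comm, mul_div_assoc]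

/-- For `d ∈ [-1,1)` and `β > 0`, the Lyapunov function `V_l` is positive definite:
`V_l(0,0) = 0` and `V_l(z) > 0` for all `z ≠ 0`. -/
theorem stmt5 (d β : ℝ) (hd : d ∈ Set.Ico (-1:ℝ) 1) (hβ : 0 < β) :
    Vl d β 0 0 = 0 ∧
    ∀ z1 z2 : ℝ, (z1, z2) ≠ ((0:ℝ), (0:ℝ)) → 0 < Vl d β z1 z2 := by
  have hpq := holderConjugate_two_sub_div_one_sub hd.2
  have hc : 1 / (2 - d) < (1 + β) / (2 - d) :=
    div_lt_div_of_pos_right (by linarith) hpq.symm.pos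
  refine ⟨?_, fun z1 z2 hz => ?_⟩
  · simp [Vl, Real.zero_rpow hpq.pos.ne', Real.zero_rpow hpq.symm.pos.ne']
  · rw [Vl_eq]
    exact hpq.rpow_div_sub_mul_add_mul_rpow_pos hc hz
end

section
/- Fix d ∈ [−1,1) and β > 0. The Lyapunov function V_l is continuously differentiable on ℝ² with partial derivatives ∂V_l/∂z₁(z₁,z₂) = ⌊z₁⌉^{1/(1−d)} − z₂ and ∂V_l/∂z₂(z₁,z₂) = −z₁ + (1+β)·⌊z₂⌉^{1−d}. Consequently, for any k̃₁, k̃₂ > 0 and the zero-input error vector field f₀(z₁,z₂) := (−k̃₁·(⌊z₁⌉^{1/(1−d)} − z₂), −k̃₂·⌊z₁⌉^{(1+d)/(1−d)}), one has for all (z₁,z₂) ∈ ℝ²: ⟨∇V_l(z₁,z₂), f₀(z₁,z₂)⟩ = −k̃₁·μ(z₁,z₂) + k̃₂·η(z₁,z₂). -/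
/-- Sign-preserving power `⌊x⌉^p = sign(x)·|x|^p`. -/
noncomputable def spow (x p : ℝ) : ℝ := Real.sign x * |x| ^ p

/-- `μ(z) = |⌊z₁⌉^{1/(1-d)} - z₂|²`. -/
noncomputable def muF (d z1 z2 : ℝ) : ℝ := |spow z1 (1/(1-d)) - z2| ^ (2:ℝ)

/-- `η(z) = (1+β)(z₁ - ⌊z₂⌉^{1-d})⌊z₁⌉^{(1+d)/(1-d)} - β|z₁|^{2/(1-d)}`. -/
noncomputable def etaF (d β z1 z2 : ℝ) : ℝ :=
  (1 + β) * (z1 - spow z2 (1 - d)) * spow z1 ((1+d)/(1-d)) - β * |z1| ^ (2/(1-d))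

/-!
For `p > 1` the map `x ↦ |x|^p` is `C¹` with derivative `p·|x|^(p-2)·x = p·⌊x⌉^(p-1)`,
which gives the gradient of `V_l` termwise. The identity along the vector field is then a ring
identity once `z₁·⌊z₁⌉^((1+d)/(1-d))` is rewritten as `|z₁|^(2/(1-d))`.
-/

lemma sign_mul_abs_eq_self (x : ℝ) : Real.sign x * |x| = x := by
  rcases lt_trichotomy x 0 with h | rfl | h
  · rw [Real.sign_of_neg h, abs_of_neg h, neg_one_mul, neg_neg]
  · simp
  · rw [Real.sign_of_pos h, abs_of_pos h, one_mul]

lemma sign_mul_self_eq_abs (x : ℝ) : Real.sign x * x = |x| := by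
  rcases lt_trichotomy x 0 with h | rfl | h
  · rw [Real.sign_of_neg h, abs_of_neg h, neg_one_mul]
  · simp
  · rw [Real.sign_of_pos h, abs_of_pos h, one_mul]

lemma abs_rpow_mul_self (x q : ℝ) : |x| ^ q * x = spow x (q + 1) := by
  rcases eq_or_ne x 0 with rfl | hx
  · simp [spow]
  · rw [spow, Real.rpow_add_one (abs_ne_zero.mpr hx), mul_left_comm, sign_mul_abs_eq_self]

lemma self_mul_spow (x : ℝ) {q : ℝ} (hq : q + 1 ≠ 0) : x * spow x q = |x| ^ (q + 1) := by
  rcases eq_or_ne x 0 with rfl | hx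
  · simp [spow, Real.zero_rpow hq]
  · rw [spow, ← mul_assoc, mul_comm x, sign_mul_self_eq_abs,
      Real.rpow_add_one (abs_ne_zero.mpr hx), mul_comm]

lemma contDiff_abs_rpow {p : ℝ} (hp : 1 < p) : ContDiff ℝ 1 fun x : ℝ => |x| ^ p := by
  simpa using contDiff_norm_rpow (E := ℝ) hp

section Lyapunov

variable {d : ℝ} (β : ℝ)

lemma contDiff_Vl (hd : d < 1) : ContDiff ℝ 1 fun z : ℝ × ℝ => Vl d β z.1 z.2 := by
  have h₁ : 1 < (2 - d) / (1 - d) := (one_lt_div (by linarith)).mpr (by linarith)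
  have h₂ : 1 < 2 - d := by linarith
  unfold Vl
  exact ((contDiff_const.mul ((contDiff_abs_rpow h₁).comp contDiff_fst)).sub
    (contDiff_fst.mul contDiff_snd)).add
    (contDiff_const.mul ((contDiff_abs_rpow h₂).comp contDiff_snd))

lemma hasFDerivAt_Vl (hd : d < 1) (z1 z2 : ℝ) :
    HasFDerivAt (fun z : ℝ × ℝ => Vl d β z.1 z.2)
      ((spow z1 (1 / (1 - d)) - z2) • ContinuousLinearMap.fst ℝ ℝ ℝ
        + (-z1 + (1 + β) * spow z2 (1 - d)) • ContinuousLinearMap.snd ℝ ℝ ℝ) (z1, z2) := by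
  have h₁ := (hasDerivAt_abs_rpow z1 ((one_lt_div (by linarith)).mpr (by linarith) :
    1 < (2 - d) / (1 - d))).comp_hasFDerivAt (z1, z2) (hasFDerivAt_fst (𝕜 := ℝ))
  have h₂ := (hasDerivAt_abs_rpow z2 (by linarith : 1 < 2 - d)).comp_hasFDerivAt (z1, z2)
    (hasFDerivAt_snd (𝕜 := ℝ))
  have hprod := (hasFDerivAt_fst (𝕜 := ℝ) (p := (z1, z2))).mul (hasFDerivAt_snd (𝕜 := ℝ))
  have e₁ : (1 - d) / (2 - d) * ((2 - d) / (1 - d) * |z1| ^ ((2 - d) / (1 - d) - 2) * z1)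
      = spow z1 (1 / (1 - d)) := by
    rw [mul_assoc, abs_rpow_mul_self]
    field_simp [show 1 - d ≠ 0 by linarith, show 2 - d ≠ 0 by linarith]
    ring_nf
  have e₂ : (1 + β) / (2 - d) * ((2 - d) * |z2| ^ (2 - d - 2) * z2)
      = (1 + β) * spow z2 (1 - d) := by
    rw [mul_assoc, abs_rpow_mul_self]
    field_simp [show 2 - d ≠ 0 by linarith]
    ring_nf
  refine (((h₁.const_mul ((1 - d) / (2 - d))).sub hprod).add
    (h₂.const_mul ((1 + β) / (2 - d)))).congr_fderiv ?_
  rw [← e₁, ← e₂]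
  ext <;> simp

lemma gradient_Vl_inner_errorField (hd : d < 1) (k1 k2 z1 z2 : ℝ) :
    (spow z1 (1/(1-d)) - z2) * (-k1 * (spow z1 (1/(1-d)) - z2))
        + (-z1 + (1 + β) * spow z2 (1 - d)) * (-k2 * spow z1 ((1+d)/(1-d)))
      = -k1 * muF d z1 z2 + k2 * etaF d β z1 z2 := by
  have hexp : (1 + d) / (1 - d) + 1 = 2 / (1 - d) := by
    field_simp [show 1 - d ≠ 0 by linarith]
    ring
  have hη : z1 * spow z1 ((1 + d) / (1 - d)) = |z1| ^ (2 / (1 - d)) := by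
    rw [self_mul_spow z1 (by rw [hexp]; exact div_ne_zero two_ne_zero (by linarith)), hexp]
  simp only [muF, etaF, Real.rpow_two, sq_abs, ← hη]
  ring

end Lyapunov

theorem stmt6_general (d β : ℝ) (hd : d ∈ Set.Ico (-1:ℝ) 1)
    (k1 k2 : ℝ) :
    ContDiff ℝ 1 (fun z : ℝ × ℝ => Vl d β z.1 z.2) ∧
    (∀ z1 z2 w1 w2 : ℝ,
      fderiv ℝ (fun z : ℝ × ℝ => Vl d β z.1 z.2) (z1, z2) (w1, w2)
        = (spow z1 (1/(1-d)) - z2) * w1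
            + (-z1 + (1 + β) * spow z2 (1 - d)) * w2) ∧
    (∀ z1 z2 : ℝ,
      (spow z1 (1/(1-d)) - z2) * (-k1 * (spow z1 (1/(1-d)) - z2))
        + (-z1 + (1 + β) * spow z2 (1 - d)) * (-k2 * spow z1 ((1+d)/(1-d)))
      = -k1 * muF d z1 z2 + k2 * etaF d β z1 z2) := by
  refine ⟨contDiff_Vl β hd.2, fun z1 z2 w1 w2 => ?_,
    gradient_Vl_inner_errorField β hd.2 k1 k2⟩
  simp [(hasFDerivAt_Vl β hd.2 z1 z2).fderiv]

/-- `V_l` is continuously differentiable with the stated partial derivatives, and the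
derivative along the zero-input error vector field equals `-k̃₁ μ + k̃₂ η`. -/
theorem stmt6 (d β : ℝ) (hd : d ∈ Set.Ico (-1:ℝ) 1) (hβ : 0 < β)
    (k1 k2 : ℝ) (hk1 : 0 < k1) (hk2 : 0 < k2) :
    ContDiff ℝ 1 (fun z : ℝ × ℝ => Vl d β z.1 z.2) ∧
    (∀ z1 z2 w1 w2 : ℝ,
      fderiv ℝ (fun z : ℝ × ℝ => Vl d β z.1 z.2) (z1, z2) (w1, w2)
        = (spow z1 (1/(1-d)) - z2) * w1
            + (-z1 + (1 + β) * spow z2 (1 - d)) * w2) ∧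
    (∀ z1 z2 : ℝ,
      (spow z1 (1/(1-d)) - z2) * (-k1 * (spow z1 (1/(1-d)) - z2))
        + (-z1 + (1 + β) * spow z2 (1 - d)) * (-k2 * spow z1 ((1+d)/(1-d)))
      = -k1 * muF d z1 z2 + k2 * etaF d β z1 z2) :=
  stmt6_general d β hd k1 k2
end
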